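/- Let u be a node. In any stable configuration of the algorithm, if p_u = null then for every neighbor v of u, p_v ≠ null and p_v ≠ u. -/
import Mathlib


/-!
Formal model of the self-stabilizing maximal-matching algorithm in the
link-register model under read/write atomicity.

Nodes form a finite simple graph `G` on a vertex type `V` whose linear order
plays the role of the distinct identifiers.  A configuration records, for each
node `u`, its pointer `p u : Option V` (`none` = null), its lock variable
`m u : Fin 3`, and for each (directed) link a register `r u v : RegFlag × Fin 3`.
-/

inductive RegFlag where
  | Idle | You | Other
deriving DecidableEq

abbrev RegVal : Type := RegFlag × Fin 3

inductive Rule (V : Type) where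
  | write (a : V)
  | seduction (a : V)
  | marriage (a : V)
  | increase
  | reset
deriving DecidableEq

structure Config (V : Type) where
  p : V → Option V
  m : V → Fin 3
  r : V → V → RegVal

variable {V : Type}

def correctRegisterValue [DecidableEq V] (C : Config V) (u a : V) : RegVal :=
  match C.p u with
  | none => (RegFlag.Idle, 0)
  | some b => if b = a then (RegFlag.You, C.m u) else (RegFlag.Other, C.m u)

def PRabandonment [LinearOrder V] (C : Config V) (u : V) : Prop :=
  ∃ v, C.p u = some v ∧
    (((C.r v u).1 ≠ RegFlag.You ∧ (v < u ∨ C.m u ≠ 0)) ∨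
     (C.r v u = (RegFlag.Other, 2) ∧ u < v))

def PRreset [LinearOrder V] (C : Config V) (u : V) : Prop :=
  ∃ v, C.p u = some v ∧ (C.r v u).1 = RegFlag.You ∧
    ((C.m u = 0 ∧ (C.r v u).2 = 2) ∨
     (C.m u = 2 ∧ (C.r v u).2 = 0) ∨
     (C.m u = 0 ∧ (C.r v u).2 = 1 ∧ v < u) ∨
     (C.m u = 1 ∧ (C.r v u).2 = 0 ∧ u < v) ∨
     (C.m u = 1 ∧ (C.r v u).2 = 2 ∧ u < v) ∨
     (C.m u = 2 ∧ (C.r v u).2 = 1 ∧ v < u))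

/-- The guard of each rule of node `u` in configuration `C`. -/
def eligible [LinearOrder V] (G : SimpleGraph V) (C : Config V) (u : V) : Rule V → Prop
  | .write a => G.Adj u a ∧ C.r u a ≠ correctRegisterValue C u a
  | .seduction a => G.Adj u a ∧ C.p u = none ∧ C.r u a = correctRegisterValue C u a ∧
      C.r a u = (RegFlag.Idle, 0) ∧ u < a
  | .marriage a => G.Adj u a ∧ C.p u = none ∧ C.r u a = correctRegisterValue C u a ∧
      C.r a u = (RegFlag.You, 0) ∧ a < u
  | .increase => ∃ v, C.p u = some v ∧ C.r u v = correctRegisterValue C u v ∧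
      (C.r v u).1 = RegFlag.You ∧
      ((C.m u = 0 ∧ ((u < v ∧ (C.r v u).2 = 1) ∨ (v < u ∧ (C.r v u).2 = 0))) ∨
       (C.m u = 1 ∧ ((u < v ∧ (C.r v u).2 = 1) ∨ (v < u ∧ (C.r v u).2 = 2))))
  | .reset => ∃ v, C.p u = some v ∧ C.r u v = correctRegisterValue C u v ∧
      (PRabandonment C u ∨ PRreset C u)

/-- Simultaneous application of (at most) one rule per node.  `A u = some R`
means node `u` executes rule `R`; each action only modifies the data owned by
the acting node. -/
def step [DecidableEq V] (C : Config V) (A : V → Option (Rule V)) : Config V where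
  p u :=
    match A u with
    | some (Rule.seduction a) => some a
    | some (Rule.marriage a) => some a
    | some Rule.reset => none
    | _ => C.p u
  m u :=
    match A u with
    | some (Rule.seduction _) => 0
    | some (Rule.marriage _) => 0
    | some Rule.reset => 0
    | some Rule.increase => C.m u + 1
    | _ => C.m u
  r u a :=
    match A u with
    | some (Rule.write b) => if a = b then correctRegisterValue C u a else C.r u a
    | _ => C.r u a

/-- An execution `C_0, A_0, C_1, A_1, …, C_T`: at each transition `i < T`, a
nonempty set of eligible rules (at most one per node) is executed
simultaneously. -/
structure Execution [LinearOrder V] (G : SimpleGraph V) where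
  T : ℕ
  conf : ℕ → Config V
  act : ℕ → V → Option (Rule V)
  act_nonempty : ∀ i < T, ∃ u, (act i u).isSome
  act_eligible : ∀ i < T, ∀ u R, act i u = some R → eligible G (conf i) u R
  conf_succ : ∀ i < T, conf (i + 1) = step (conf i) (act i)

/-- A configuration is stable if no rule is eligible at any node. -/
def stableConfig [LinearOrder V] (G : SimpleGraph V) (C : Config V) : Prop :=
  ∀ u R, ¬ eligible G C u R

/-- The edge `(s,t)` (with `s < t` intended) is in state `(You, α, β)`. -/
def edgeState (C : Config V) (s t : V) (α β : Fin 3) : Prop :=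
  C.p s = some t ∧ C.p t = some s ∧ C.m s = α ∧ C.m t = β

def updatedCorrectState (C : Config V) (s t : V) (α β : Fin 3) : Prop :=
  edgeState C s t α β ∧ C.r s t = (RegFlag.You, α) ∧ C.r t s = (RegFlag.You, β) ∧
    ((α, β) = ((0 : Fin 3), (0 : Fin 3)) ∨ (α, β) = (0, 1) ∨ (α, β) = (1, 1) ∨
     (α, β) = (2, 1) ∨ (α, β) = (2, 2))

def toUpdateCorrectState (C : Config V) (s t : V) (α β : Fin 3) : Prop :=
  edgeState C s t α β ∧
    ((((α, β) = ((0 : Fin 3), (1 : Fin 3)) ∨ (α, β) = (2, 2)) ∧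
        C.r s t = (RegFlag.You, α) ∧ C.r t s = (RegFlag.You, β - 1)) ∨
     (((α, β) = ((1 : Fin 3), (1 : Fin 3)) ∨ (α, β) = (2, 1)) ∧
        C.r s t = (RegFlag.You, α - 1) ∧ C.r t s = (RegFlag.You, β)))

def correctState (C : Config V) (s t : V) (α β : Fin 3) : Prop :=
  updatedCorrectState C s t α β ∨ toUpdateCorrectState C s t α β

/-- Node `u` executes a `v`-rule in transition `k`: one of `Write(v)`,
`Seduction(v)`, `Marriage(v)`, a `v`-`Increase` or a `v`-`Reset`. -/
def execVRule [LinearOrder V] {G : SimpleGraph V} (E : Execution G) (k : ℕ) (u v : V) : Prop :=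
  k < E.T ∧
    (E.act k u = some (Rule.write v) ∨ E.act k u = some (Rule.seduction v) ∨
     E.act k u = some (Rule.marriage v) ∨
     ((E.act k u = some Rule.increase ∨ E.act k u = some Rule.reset) ∧
       (E.conf k).p u = some v))

/-- In any stable configuration, if `p_u = null`, then every
neighbor `v` of `u` satisfies `p_v ≠ null` and `p_v ≠ u`. -/
theorem stmt_5 {V : Type} [Fintype V] [LinearOrder V] (G : SimpleGraph V)
    (C : Config V) (hC : stableConfig G C) (u : V) (hpu : C.p u = none) :
    ∀ v, G.Adj u v → C.p v ≠ none ∧ C.p v ≠ some u := by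
  intro v hadj
  -- registers are correct, since Write is not eligible
  have hruv : C.r u v = correctRegisterValue C u v := by
    by_contra h; exact hC u (.write v) ⟨hadj, h⟩
  have hrvu : C.r v u = correctRegisterValue C v u := by
    by_contra h; exact hC v (.write u) ⟨hadj.symm, h⟩
  have hruv' : C.r u v = (RegFlag.Idle, 0) := by
    rw [hruv, correctRegisterValue, hpu]
  constructor
  · intro hpv
    have hrvu' : C.r v u = (RegFlag.Idle, 0) := by
      rw [hrvu, correctRegisterValue, hpv]
    rcases lt_trichotomy u v with h | h | h
    · exact hC u (.seduction v) ⟨hadj, hpu, hruv, hrvu', h⟩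
    · exact (G.ne_of_adj hadj) h
    · exact hC v (.seduction u) ⟨hadj.symm, hpv, hrvu, hruv', h⟩
  · intro hpv
    have hrvu' : C.r v u = (RegFlag.You, C.m v) := by
      rw [hrvu, correctRegisterValue, hpv]; simp
    by_cases hm : v < u ∧ C.m v = 0
    · exact hC u (.marriage v) ⟨hadj, hpu, hruv, by rw [hrvu', hm.2], hm.1⟩
    · refine hC v .reset ⟨u, hpv, hrvu, Or.inl ⟨u, hpv, Or.inl ⟨?_, ?_⟩⟩⟩
      · rw [hruv']; simp
      · rcases lt_trichotomy u v with h | h | h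
        · exact Or.inl h
        · exact absurd h (G.ne_of_adj hadj)
        · exact Or.inr fun h0 => hm ⟨h, h0⟩
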